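/- Let A be an N×N {0,1}-matrix with no zero rows, and ρ : X̄_A → X_A the factor map from the two-sided to the one-sided Markov shift. The induced map H^A → H̄^A, [ξ] ↦ [ξ∘ρ], is a group isomorphism carrying the positive cone H^A_+ = {[ξ] | ∃ ξ' ≥ 0 with [ξ]=[ξ']} onto H̄^A_+. -/

import Mathlib

/-- The one-sided topological Markov shift of a matrix `A`. -/
def oneSided {N : ℕ} (A : Matrix (Fin N) (Fin N) ℕ) : Set (ℕ → Fin N) :=
  {x | ∀ n, A (x n) (x (n + 1)) = 1}

/-- The two-sided topological Markov shift of a matrix `A`. -/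
def twoSided {N : ℕ} (A : Matrix (Fin N) (Fin N) ℕ) : Set (ℤ → Fin N) :=
  {x | ∀ n : ℤ, A (x n) (x (n + 1)) = 1}

/-- The one-sided shift map on `X_A`. -/
def sigmaS {N : ℕ} (A : Matrix (Fin N) (Fin N) ℕ) (x : oneSided A) : oneSided A :=
  ⟨fun n => x.1 (n + 1), fun n => x.2 (n + 1)⟩

/-- The two-sided shift map on `X̄_A`. -/
def sigmaBarS {N : ℕ} (A : Matrix (Fin N) (Fin N) ℕ) (x : twoSided A) : twoSided A :=
  ⟨fun n => x.1 (n + 1), fun n => by simpa [add_assoc] using x.2 (n + 1)⟩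

/-- The factor map `ρ : X̄_A → X_A`, restriction to positive coordinates. -/
def rhoS {N : ℕ} (A : Matrix (Fin N) (Fin N) ℕ) (x : twoSided A) : oneSided A :=
  ⟨fun n => x.1 ((n : ℤ) + 1), fun n => by
    have h := x.2 ((n : ℤ) + 1)
    convert h using 3
    simp only [Nat.cast_add, Nat.cast_one]⟩


lemma continuous_sigmaS {N : ℕ} (A : Matrix (Fin N) (Fin N) ℕ) :
    Continuous (sigmaS A) := by
  apply Continuous.subtype_mk
  exact continuous_pi fun n => (continuous_apply (n + 1)).comp continuous_subtype_val

lemma continuous_sigmaBarS {N : ℕ} (A : Matrix (Fin N) (Fin N) ℕ) :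
    Continuous (sigmaBarS A) := by
  apply Continuous.subtype_mk
  exact continuous_pi fun n => (continuous_apply (n + 1)).comp continuous_subtype_val

lemma continuous_rhoS {N : ℕ} (A : Matrix (Fin N) (Fin N) ℕ) :
    Continuous (rhoS A) := by
  apply Continuous.subtype_mk
  exact continuous_pi fun n => (continuous_apply ((n : ℤ) + 1)).comp continuous_subtype_val

/-- The coboundary homomorphism `ξ ↦ ξ - ξ ∘ σ_A` on `C(X_A, ℤ)`. -/
noncomputable def cobOne {N : ℕ} (A : Matrix (Fin N) (Fin N) ℕ) :
    C(oneSided A, ℤ) →+ C(oneSided A, ℤ) :=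
  AddMonoidHom.mk' (fun ξ => ξ - ξ.comp ⟨sigmaS A, continuous_sigmaS A⟩)
    (by intro f g; ext x; simp [ContinuousMap.comp]; ring)

/-- The coboundary homomorphism `ζ ↦ ζ - ζ ∘ σ̄_A` on `C(X̄_A, ℤ)`. -/
noncomputable def cobTwo {N : ℕ} (A : Matrix (Fin N) (Fin N) ℕ) :
    C(twoSided A, ℤ) →+ C(twoSided A, ℤ) :=
  AddMonoidHom.mk' (fun ζ => ζ - ζ.comp ⟨sigmaBarS A, continuous_sigmaBarS A⟩)
    (by intro f g; ext x; simp [ContinuousMap.comp]; ring)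

/-- The ordered cohomology group `H^A` of the one-sided shift. -/
noncomputable def HOne {N : ℕ} (A : Matrix (Fin N) (Fin N) ℕ) :=
  C(oneSided A, ℤ) ⧸ (cobOne A).range

/-- The ordered cohomology group `H̄^A` of the two-sided shift. -/
noncomputable def HTwo {N : ℕ} (A : Matrix (Fin N) (Fin N) ℕ) :=
  C(twoSided A, ℤ) ⧸ (cobTwo A).range

noncomputable instance {N : ℕ} (A : Matrix (Fin N) (Fin N) ℕ) :
    AddCommGroup (HOne A) := QuotientAddGroup.Quotient.addCommGroup _

noncomputable instance {N : ℕ} (A : Matrix (Fin N) (Fin N) ℕ) :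
    AddCommGroup (HTwo A) := QuotientAddGroup.Quotient.addCommGroup _

/-- The positive cone `H^A_+`. -/
def posConeOne {N : ℕ} (A : Matrix (Fin N) (Fin N) ℕ) : Set (HOne A) :=
  {c | ∃ ξ : C(oneSided A, ℤ), (∀ x, 0 ≤ ξ x) ∧ QuotientAddGroup.mk ξ = c}

/-- The positive cone `H̄^A_+`. -/
def posConeTwo {N : ℕ} (A : Matrix (Fin N) (Fin N) ℕ) : Set (HTwo A) :=
  {c | ∃ ζ : C(twoSided A, ℤ), (∀ x, 0 ≤ ζ x) ∧ QuotientAddGroup.mk ζ = c}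

/-!
A continuous integer-valued function on the compact shift space `X̄_A` depends on finitely many
coordinates, so some shift `ζ ∘ σ̄ⁿ` of it depends only on positive coordinates and factors as
`ξ ∘ ρ`, with `ξ ≥ 0` when `ζ ≥ 0`. Since `ζ - ζ ∘ σ̄ⁿ` is a coboundary, this gives surjectivity on
the groups and on the positive cones. For injectivity, if `ξ ∘ ρ = η - η ∘ σ̄`, factoring a shift
of the transfer function `η` through `ρ` as `θ` shows that `ξ ∘ σⁿ - (θ - θ ∘ σ)` vanishes on the
image of `ρ`, hence is a coboundary, because that image contains `σᴺ(X_A)`: among the first `N + 1`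
symbols of a point one repeats, and the point extends to the left around the cycle in between.
-/

section Coboundary

variable {X Y M : Type*} [TopologicalSpace X] [TopologicalSpace Y] [TopologicalSpace M]
  [AddCommGroup M] [IsTopologicalAddGroup M]

def ContinuousMap.iterate (T : C(X, X)) (n : ℕ) : C(X, X) := ⟨T^[n], T.continuous.iterate n⟩

@[simp]
lemma ContinuousMap.iterate_apply (T : C(X, X)) (n : ℕ) (x : X) : T.iterate n x = T^[n] x := rfl

def coboundary (T : C(X, X)) : C(X, M) →+ C(X, M) :=
  AddMonoidHom.mk' (fun f : C(X, M) => f - f.comp T) fun f g => by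
    ext
    simp only [ContinuousMap.sub_apply, ContinuousMap.add_apply, ContinuousMap.comp_apply]
    abel

@[simp]
lemma coboundary_apply (T : C(X, X)) (f : C(X, M)) (x : X) :
    coboundary T f x = f x - f (T x) := rfl

lemma coboundary_comp_of_semiconj {T : C(X, X)} {S : C(Y, Y)} {φ : C(Y, X)}
    (h : Function.Semiconj φ S T) (f : C(X, M)) :
    (coboundary T f).comp φ = coboundary S (f.comp φ) := by
  ext y
  simp [h.eq]

lemma sub_comp_iterate_mem_range_coboundary (T : C(X, X)) (f : C(X, M)) (n : ℕ) :
    f - f.comp (T.iterate n) ∈ (coboundary T).range := by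
  induction n with
  | zero => exact ⟨0, by ext; simp⟩
  | succ n ih =>
    have hstep : f - f.comp (T.iterate (n + 1)) =
        (f - f.comp (T.iterate n)) + coboundary T (f.comp (T.iterate n)) := by
      ext x
      simp [Function.iterate_succ_apply]
    rw [hstep]
    exact add_mem ih ⟨_, rfl⟩

lemma coboundary_comp_iterate (T : C(X, X)) (f : C(X, M)) (n : ℕ) :
    (coboundary T f).comp (T.iterate n) = coboundary T (f.comp (T.iterate n)) :=
  coboundary_comp_of_semiconj (T := T) (S := T) (φ := T.iterate n)
    ((Function.Commute.refl T).iterate_left n) f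

end Coboundary

lemma isClosed_setOf_forall_apply_apply {ι κ : Type*} [TopologicalSpace κ] [DiscreteTopology κ]
    (R : κ → κ → Prop) (s : ι → ι) : IsClosed {x : ι → κ | ∀ n, R (x n) (x (s n))} := by
  rw [Set.ofPred_forall]
  exact isClosed_iInter fun n =>
    show IsClosed ((fun x : ι → κ => (x n, x (s n))) ⁻¹' {q | R q.1 q.2}) from
      (isClosed_discrete _).preimage ((continuous_apply n).prodMk (continuous_apply (s n)))

lemma exists_finset_forall_eq_of_continuous {ι κ β : Type*} [TopologicalSpace κ] [T2Space κ]
    [TopologicalSpace β] [DiscreteTopology β] {S : Set (ι → κ)} [CompactSpace S] (f : C(S, β)) :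
    ∃ I : Finset ι, ∀ x y : S, (∀ i ∈ I, x.1 i = y.1 i) → f x = f y := by
  -- The compact set of pairs separated by `f` is covered by the increasing family of open sets
  -- of pairs separated by a coordinate in `I`.
  let K : Set (S × S) := {p | f p.1 ≠ f p.2}
  let U : Finset ι → Set (S × S) := fun I => ⋃ i ∈ I, {p | p.1.1 i ≠ p.2.1 i}
  have hU : ∀ I, IsOpen (U I) := fun I =>
    isOpen_biUnion fun i _ => isOpen_ne_fun
      ((continuous_apply i).comp (continuous_subtype_val.comp continuous_fst))
      ((continuous_apply i).comp (continuous_subtype_val.comp continuous_snd))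
  have hK : IsCompact K :=
    ((isOpen_discrete {q : β × β | q.1 = q.2}).preimage (f.continuous.prodMap f.continuous))
      |>.isClosed_compl.isCompact
  have hcover : K ⊆ ⋃ I, U I := by
    rintro ⟨x, y⟩ hxy
    obtain ⟨i, hi⟩ := Function.ne_iff.mp (Subtype.coe_ne_coe.mpr (ne_of_apply_ne f hxy))
    exact Set.mem_iUnion.mpr ⟨{i}, Set.mem_biUnion (Finset.mem_singleton_self i) hi⟩
  obtain ⟨I, hI⟩ := hK.elim_directed_cover U hU hcover
    (Monotone.directed_le fun I J hIJ => Set.biUnion_subset_biUnion_left hIJ)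
  refine ⟨I, fun x y hxy => ?_⟩
  by_contra hne
  obtain ⟨i, hi, hne'⟩ := Set.mem_iUnion₂.mp (hI (show (x, y) ∈ K from hne))
  exact hne' (hxy i hi)

lemma exists_continuousMap_comp_eq {X Y D M : Type*} [TopologicalSpace X] [TopologicalSpace D]
    [DiscreteTopology D] [TopologicalSpace M] [Zero M] [Preorder M] (π : C(X, D)) (ρ : Y → X)
    (ζ : Y → M) (hζ : ∀ y y', π (ρ y) = π (ρ y') → ζ y = ζ y') :
    ∃ ξ : C(X, M), (∀ y, ξ (ρ y) = ζ y) ∧ ((∀ y, 0 ≤ ζ y) → ∀ x, 0 ≤ ξ x) := by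
  classical
  let F : D → M := fun d => if h : ∃ y, π (ρ y) = d then ζ h.choose else 0
  refine ⟨⟨F ∘ π, continuous_of_discreteTopology.comp π.continuous⟩, fun y => ?_, fun hpos x => ?_⟩
  · have h : ∃ y', π (ρ y') = π (ρ y) := ⟨y, rfl⟩
    simpa [F, h] using hζ _ _ h.choose_spec
  · simp only [ContinuousMap.coe_mk, Function.comp_apply, F]
    split_ifs
    exacts [hpos _, le_rfl]

lemma Int.emod_add_one_eq_or (j : ℤ) {p : ℤ} (hp : 0 < p) :
    (j + 1) % p = j % p + 1 ∨ (j % p + 1 = p ∧ (j + 1) % p = 0) := by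
  have hr₀ := Int.emod_nonneg j hp.ne'
  have hr₁ := Int.emod_lt_of_pos j hp
  rw [← Int.emod_add_emod]
  rcases (show j % p + 1 < p ∨ j % p + 1 = p by omega) with hlt | heq
  · exact Or.inl (Int.emod_eq_of_lt (by omega) hlt)
  · exact Or.inr ⟨heq, by rw [heq, Int.emod_self]⟩

section MarkovShift

variable {N : ℕ} (A : Matrix (Fin N) (Fin N) ℕ)

lemma isClosed_oneSided : IsClosed (oneSided A) :=
  isClosed_setOf_forall_apply_apply (fun a b => A a b = 1) (· + 1)

lemma isClosed_twoSided : IsClosed (twoSided A) :=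
  isClosed_setOf_forall_apply_apply (fun a b => A a b = 1) (· + 1)

instance : CompactSpace (oneSided A) :=
  isCompact_iff_compactSpace.mp (isClosed_oneSided A).isCompact

instance : CompactSpace (twoSided A) :=
  isCompact_iff_compactSpace.mp (isClosed_twoSided A).isCompact

def sigmaC : C(oneSided A, oneSided A) := ⟨sigmaS A, continuous_sigmaS A⟩

def sigmaBarC : C(twoSided A, twoSided A) := ⟨sigmaBarS A, continuous_sigmaBarS A⟩

def rhoC : C(twoSided A, oneSided A) := ⟨rhoS A, continuous_rhoS A⟩

lemma cobOne_eq_coboundary : cobOne A = coboundary (sigmaC A) := rfl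

lemma cobTwo_eq_coboundary : cobTwo A = coboundary (sigmaBarC A) := rfl

lemma semiconj_rhoS : Function.Semiconj (rhoS A) (sigmaBarS A) (sigmaS A) := fun _ => rfl

lemma semiconj_rhoC : Function.Semiconj (rhoC A) (sigmaBarC A) (sigmaC A) := semiconj_rhoS A

variable {A}

lemma sigmaS_iterate_apply (n : ℕ) (x : oneSided A) (i : ℕ) :
    ((sigmaS A)^[n] x).1 i = x.1 (i + n) := by
  induction n generalizing x with
  | zero => rfl
  | succ n ih => rw [Function.iterate_succ_apply, ih, ← add_assoc]; rfl

lemma sigmaBarS_iterate_apply (n : ℕ) (z : twoSided A) (j : ℤ) :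
    ((sigmaBarS A)^[n] z).1 j = z.1 (j + n) := by
  induction n generalizing z with
  | zero => simp
  | succ n ih => rw [Function.iterate_succ_apply, ih]; simp [sigmaBarS, add_assoc]

lemma exists_rhoS_eq_sigmaS_of_apply_eq {y : oneSided A} {p : ℕ} (hp : 0 < p)
    (hy : y.1 p = y.1 0) : ∃ z, rhoS A z = sigmaS A y := by
  -- `z` agrees with `y` on `ℕ` and runs backwards around the cycle `y 0 → ⋯ → y p = y 0`.
  let e : ℤ → ℕ := fun j => if 0 ≤ j then j.toNat else (j % p).toNat
  have he : ∀ j, A (y.1 (e j)) (y.1 (e (j + 1))) = 1 := by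
    intro j
    rcases le_or_gt 0 j with hj | hj
    · have hsucc : e (j + 1) = e j + 1 := by
        simp only [e, if_pos hj, if_pos (by omega : 0 ≤ j + 1)]
        omega
      rw [hsucc]
      exact y.2 _
    · have h₀ : e j = (j % p).toNat := if_neg (by omega)
      have h₁ : e (j + 1) = ((j + 1) % p).toNat := by
        by_cases hj₁ : 0 ≤ j + 1
        · obtain rfl : j = -1 := by omega
          simp [e]
        · exact if_neg hj₁
      have hr := Int.emod_nonneg j (show (p : ℤ) ≠ 0 by omega)
      rcases Int.emod_add_one_eq_or j (show (0 : ℤ) < p by omega) with hsucc | ⟨hlast, hzero⟩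
      · rw [h₀, h₁, hsucc, show (j % p + 1).toNat = (j % p).toNat + 1 by omega]
        exact y.2 _
      · rw [h₀, h₁, hzero, show (j % p).toNat = p - 1 by omega, Int.toNat_zero, ← hy]
        simpa [Nat.sub_add_cancel hp] using y.2 (p - 1)
  refine ⟨⟨fun j => y.1 (e j), he⟩, Subtype.ext (funext fun n => ?_)⟩
  show y.1 (e ((n : ℤ) + 1)) = y.1 (n + 1)
  simp only [e, if_pos (by omega : (0 : ℤ) ≤ n + 1)]
  congr 1

lemma exists_rhoS_eq_sigmaS_iterate (x : oneSided A) : ∃ z, rhoS A z = (sigmaS A)^[N] x := by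
  obtain ⟨a, ha, b, hb, hne, hab⟩ := Finset.exists_ne_map_eq_of_card_lt_of_maps_to
    (s := Finset.range (N + 1)) (t := Finset.univ) (by simp) (f := x.1)
    (fun _ _ => Finset.mem_univ _)
  wlog hlt : a < b generalizing a b
  · exact this b hb a ha hne.symm hab.symm (by omega)
  simp only [Finset.mem_range] at ha hb
  obtain ⟨z, hz⟩ := exists_rhoS_eq_sigmaS_of_apply_eq (y := (sigmaS A)^[a] x) (p := b - a)
    (by omega) (by simp only [sigmaS_iterate_apply, zero_add, Nat.sub_add_cancel hlt.le, hab])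
  refine ⟨(sigmaBarS A)^[N - a - 1] z, ?_⟩
  rw [((semiconj_rhoS A).iterate_right _).eq, hz, ← Function.iterate_succ_apply' (sigmaS A),
    ← Function.iterate_add_apply]
  congr 1
  omega

end MarkovShift

section Cohomology

variable {N : ℕ} {A : Matrix (Fin N) (Fin N) ℕ}

lemma exists_comp_rhoC_eq_comp_iterate (ζ : C(twoSided A, ℤ)) :
    ∃ n, ∃ ξ : C(oneSided A, ℤ), ξ.comp (rhoC A) = ζ.comp ((sigmaBarC A).iterate n) ∧
      ((∀ z, 0 ≤ ζ z) → ∀ x, 0 ≤ ξ x) := by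
  obtain ⟨I, hI⟩ := exists_finset_forall_eq_of_continuous ζ
  obtain ⟨n, hn⟩ : ∃ n : ℕ, ∀ j ∈ I, 0 < j + n := ⟨I.sup Int.natAbs + 1, fun j hj => by
    have := Finset.le_sup (f := Int.natAbs) hj
    omega⟩
  let π : C(oneSided A, I → Fin N) :=
    ⟨fun x j => x.1 (j + n - 1 : ℤ).toNat, continuous_pi fun j =>
      (continuous_apply _).comp continuous_subtype_val⟩
  obtain ⟨ξ, hξ, hpos⟩ := exists_continuousMap_comp_eq π (rhoS A)
    (ζ.comp ((sigmaBarC A).iterate n)) fun z z' h => hI _ _ fun j hj => by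
      have hidx : ((j + n - 1).toNat : ℤ) + 1 = j + n := by have := hn j hj; omega
      have hzz' : z.1 (((j + n - 1).toNat : ℤ) + 1) = z'.1 (((j + n - 1).toNat : ℤ) + 1) :=
        congrFun h ⟨j, hj⟩
      rw [hidx] at hzz'
      simpa [sigmaBarC, sigmaBarS_iterate_apply] using hzz'
  exact ⟨n, ξ, ContinuousMap.ext hξ, fun h => hpos fun z => h _⟩

lemma mem_range_cobOne_of_comp_rhoC_eq_zero {h : C(oneSided A, ℤ)}
    (hρ : h.comp (rhoC A) = 0) : h ∈ (cobOne A).range := by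
  have hshift : h.comp ((sigmaC A).iterate N) = 0 := by
    ext x
    obtain ⟨z, hz⟩ := exists_rhoS_eq_sigmaS_iterate x
    simpa [sigmaC, rhoC, ← hz] using DFunLike.congr_fun hρ z
  rw [cobOne_eq_coboundary]
  simpa [hshift] using sub_comp_iterate_mem_range_coboundary (sigmaC A) h N

lemma mem_range_cobOne_of_comp_rhoC_mem {ξ : C(oneSided A, ℤ)}
    (hξ : ξ.comp (rhoC A) ∈ (cobTwo A).range) : ξ ∈ (cobOne A).range := by
  obtain ⟨η, hη⟩ := hξ
  obtain ⟨n, θ, hθ, -⟩ := exists_comp_rhoC_eq_comp_iterate η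
  have hvanish : (ξ.comp ((sigmaC A).iterate n) - cobOne A θ).comp (rhoC A) = 0 := by
    have hcomm : (ξ.comp ((sigmaC A).iterate n)).comp (rhoC A) =
        (ξ.comp (rhoC A)).comp ((sigmaBarC A).iterate n) := by
      ext z
      exact congrArg ξ (((semiconj_rhoS A).iterate_right n).eq z).symm
    rw [ContinuousMap.sub_comp, hcomm, ← hη, cobTwo_eq_coboundary, coboundary_comp_iterate, ← hθ,
      cobOne_eq_coboundary, coboundary_comp_of_semiconj (semiconj_rhoC A), sub_self]
  have hθ' : cobOne A θ ∈ (cobOne A).range := ⟨θ, rfl⟩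
  have := add_mem (add_mem (sub_comp_iterate_mem_range_coboundary (sigmaC A) ξ n)
    (mem_range_cobOne_of_comp_rhoC_eq_zero hvanish)) hθ'
  rwa [sub_add_sub_cancel, sub_add_cancel] at this

end Cohomology

section InducedMap

variable {N : ℕ} (A : Matrix (Fin N) (Fin N) ℕ)

noncomputable def rhoStar : HOne A →+ HTwo A :=
  QuotientAddGroup.map _ _ (ContinuousMap.compAddMonoidHom' (rhoC A)) <| by
    rintro _ ⟨ξ, rfl⟩
    exact ⟨ξ.comp (rhoC A), (coboundary_comp_of_semiconj (semiconj_rhoC A) ξ).symm⟩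

lemma rhoStar_mk (ξ : C(oneSided A, ℤ)) :
    rhoStar A (QuotientAddGroup.mk ξ) = QuotientAddGroup.mk (ξ.comp (rhoC A)) := rfl

lemma rhoStar_injective : Function.Injective (rhoStar A) := by
  refine (injective_iff_map_eq_zero _).mpr fun c hc => ?_
  induction c using QuotientAddGroup.induction_on with | H ξ => ?_
  rw [rhoStar_mk] at hc
  exact (QuotientAddGroup.eq_zero_iff _).mpr
    (mem_range_cobOne_of_comp_rhoC_mem ((QuotientAddGroup.eq_zero_iff _).mp hc))

lemma exists_rhoStar_mk_eq (ζ : C(twoSided A, ℤ)) :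
    ∃ ξ : C(oneSided A, ℤ), rhoStar A (QuotientAddGroup.mk ξ) = QuotientAddGroup.mk ζ ∧
      ((∀ z, 0 ≤ ζ z) → ∀ x, 0 ≤ ξ x) := by
  obtain ⟨n, ξ, hξ, hpos⟩ := exists_comp_rhoC_eq_comp_iterate ζ
  refine ⟨ξ, ?_, hpos⟩
  rw [rhoStar_mk, hξ]
  exact (QuotientAddGroup.eq_iff_sub_mem.mpr
    (sub_comp_iterate_mem_range_coboundary (sigmaBarC A) ζ n)).symm

lemma rhoStar_surjective : Function.Surjective (rhoStar A) := by
  intro c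
  induction c using QuotientAddGroup.induction_on with | H ζ => ?_
  obtain ⟨ξ, hξ, -⟩ := exists_rhoStar_mk_eq A ζ
  exact ⟨_, hξ⟩

lemma image_rhoStar_posConeOne : rhoStar A '' posConeOne A = posConeTwo A := by
  ext c
  constructor
  · rintro ⟨_, ⟨ξ, hξ, rfl⟩, rfl⟩
    exact ⟨ξ.comp (rhoC A), fun z => hξ _, rfl⟩
  · rintro ⟨ζ, hζ, rfl⟩
    obtain ⟨ξ, hξ, hpos⟩ := exists_rhoStar_mk_eq A ζ
    exact ⟨_, ⟨ξ, hpos hζ, rfl⟩, hξ⟩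

end InducedMap

theorem stmt8_general {N : ℕ} (A : Matrix (Fin N) (Fin N) ℕ) :
    ∃ Φ : HOne A ≃+ HTwo A,
      (∀ ξ : C(oneSided A, ℤ),
        Φ (QuotientAddGroup.mk ξ) =
          QuotientAddGroup.mk (ξ.comp ⟨rhoS A, continuous_rhoS A⟩)) ∧
      Φ '' posConeOne A = posConeTwo A :=
  ⟨AddEquiv.ofBijective (rhoStar A) ⟨rhoStar_injective A, rhoStar_surjective A⟩,
    rhoStar_mk A, image_rhoStar_posConeOne A⟩

theorem stmt8 {N : ℕ} (A : Matrix (Fin N) (Fin N) ℕ)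
    (hA : ∀ i j, A i j = 0 ∨ A i j = 1)
    (hrows : ∀ i : Fin N, ∃ j : Fin N, A i j = 1) :
    ∃ Φ : HOne A ≃+ HTwo A,
      (∀ ξ : C(oneSided A, ℤ),
        Φ (QuotientAddGroup.mk ξ) =
          QuotientAddGroup.mk (ξ.comp ⟨rhoS A, continuous_rhoS A⟩)) ∧
      Φ '' posConeOne A = posConeTwo A :=
  stmt8_general A
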